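/- arXiv:2412.12207 — 4 statements merged into one kernel-verified Lean document; each statement's English description precedes it below -/
import Mathlib

section
/- For $\alpha > -1/2$ and $T > 0$, the inner product of the $i$-th normalized shifted Legendre polynomial $\hat P(i,\cdot)$ with the power function $t \mapsto t^\alpha$ over $[0,T]$ equals $T^\alpha\sqrt{T}\,\frac{\sqrt{2i+1}\,\alpha(\alpha-1)\cdots(\alpha-i+1)}{(\alpha+1)(\alpha+2)\cdots(\alpha+i+1)}$. -/
open Real

/-- Standardized Legendre polynomial on `[-1,1]` via the Rodrigues formula. -/
noncomputable def legendreP (i : ℕ) (x : ℝ) : ℝ :=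
  (1 / (2 ^ i * (Nat.factorial i))) * iteratedDeriv i (fun y : ℝ => (y ^ 2 - 1) ^ i) x

/-- Normalized shifted Legendre polynomial on `[0,T]`. -/
noncomputable def legendreHat (T : ℝ) (i : ℕ) (t : ℝ) : ℝ :=
  Real.sqrt ((2 * i + 1) / T) * legendreP i (2 * t / T - 1)

open Polynomial Finset

/-!
Rewriting `legendreHat T i` through the Rodrigues formula, its integral against `t ^ α` is,
up to a constant, the moment of `D^i (t^i (t - T)^i)` against `t ^ α`. Integrating by parts `i`
times moves every derivative onto `t ^ α`: the boundary terms vanish because `t^i (t - T)^i`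
has zeros of order `i` at both ends, and the factors `α (α - 1) ⋯ (α - i + 1)` appear. What is
left is a Beta integral `∫₀ᵀ t^α (t - T)^i dt`, whose value `(-1)^i i! T^(α+i+1) / ((α+1)⋯(α+i+1))`
follows by induction on `i` from `t^a (t - T)^(b+1) = t^(a+1) (t - T)^b - T t^a (t - T)^b`.

Since `α - j` drops below `-1`, the intermediate moments are Hadamard finite parts, taken
coefficientwise as `∫₀ᵀ t^γ t^k dt := T^(γ+k+1)/(γ+k+1)`; the integration by parts is then an
identity between coefficients.
-/

theorem Polynomial.iteratedDeriv_eval {𝕜 : Type*} [NontriviallyNormedField 𝕜] (p : 𝕜[X]) (n : ℕ) :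
    iteratedDeriv n (fun x => p.eval x) = fun x => (derivative^[n] p).eval x := by
  induction n with
  | zero => simp
  | succ n ih =>
    rw [iteratedDeriv_succ, ih, Function.iterate_succ_apply']
    funext x
    exact Polynomial.deriv _

theorem legendreP_two_mul_div_sub_one {T : ℝ} (hT : T ≠ 0) (i : ℕ) (t : ℝ) :
    legendreP i (2 * t / T - 1)
      = (derivative^[i] (X ^ i * (X - C T) ^ i)).eval t / (i.factorial * T ^ i) := by
  set g : ℝ → ℝ := fun y => (y ^ 2 - 1) ^ i
  have hg : ContDiff ℝ i (fun z => g (z - 1)) := by fun_prop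
  have hshift : (fun t => g (2 / T * t - 1))
      = fun t => (4 / T ^ 2) ^ i * (X ^ i * (X - C T) ^ i : ℝ[X]).eval t := by
    funext t
    simp only [g, eval_mul, eval_pow, eval_X, eval_sub, eval_C, ← mul_pow]
    congr 1
    field_simp
    ring
  have key : (2 / T) ^ i * iteratedDeriv i g (2 / T * t - 1)
      = (4 / T ^ 2) ^ i * (derivative^[i] (X ^ i * (X - C T) ^ i)).eval t := by
    have h := congrFun (iteratedDeriv_comp_const_mul hg (2 / T)) t
    rw [iteratedDeriv_comp_sub_const] at h
    rw [← h, hshift, iteratedDeriv_const_mul_field, iteratedDeriv_eval]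
  have h2T : ((2:ℝ) / T) ^ i ≠ 0 := pow_ne_zero _ (by positivity)
  rw [legendreP, show 2 * t / T = 2 / T * t by ring]
  rw [show (4 / T ^ 2 : ℝ) ^ i = (2 / T) ^ i * (2 / T) ^ i by rw [← mul_pow]; ring,
    mul_assoc] at key
  rw [mul_left_cancel₀ h2T key, div_pow]
  field_simp

/-- The finite part of `∫₀ᵀ t ^ γ * p t dt`, defined coefficientwise. -/
noncomputable def powerMoment (T γ : ℝ) : ℝ[X] →ₗ[ℝ] ℝ :=
  lsum fun k => (T ^ (γ + k + 1) / (γ + k + 1)) • LinearMap.id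

section powerMoment

variable {T γ : ℝ}

theorem powerMoment_apply (p : ℝ[X]) :
    powerMoment T γ p = p.sum fun k a => T ^ (γ + k + 1) / (γ + k + 1) * a := rfl

theorem powerMoment_monomial (k : ℕ) (a : ℝ) :
    powerMoment T γ (monomial k a) = T ^ (γ + k + 1) / (γ + k + 1) * a := by
  rw [powerMoment_apply, sum_monomial_index]
  exact mul_zero _

theorem powerMoment_X_pow (k : ℕ) :
    powerMoment T γ (X ^ k) = T ^ (γ + k + 1) / (γ + k + 1) := by
  rw [← monomial_one_right_eq_X_pow, powerMoment_monomial, mul_one]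

theorem integral_rpow_mul_eval (hT : 0 ≤ T) (hγ : -1 < γ) (p : ℝ[X]) :
    ∫ t in (0:ℝ)..T, t ^ γ * p.eval t = powerMoment T γ p := by
  have hγk (k : ℕ) : -1 < γ + k := by linarith [k.cast_nonneg (α := ℝ)]
  have hpos : ∀ t ∈ Set.uIoc 0 T, 0 < t := fun t ht => by
    rw [Set.uIoc_of_le hT] at ht; exact ht.1
  calc ∫ t in (0:ℝ)..T, t ^ γ * p.eval t
      = ∫ t in (0:ℝ)..T, ∑ k ∈ p.support, p.coeff k * t ^ (γ + k) := by
        refine intervalIntegral.integral_congr_ae (.of_forall fun t ht => ?_)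
        simp only [eval_eq_sum, Polynomial.sum_def, mul_sum, rpow_add_natCast (hpos t ht).ne']
        exact sum_congr rfl fun k _ => by ring
    _ = powerMoment T γ p := by
        rw [powerMoment_apply, Polynomial.sum_def, intervalIntegral.integral_finsetSum fun k _ =>
          (intervalIntegral.intervalIntegrable_rpow' (hγk k)).const_mul _]
        refine sum_congr rfl fun k _ => ?_
        rw [intervalIntegral.integral_const_mul, integral_rpow (.inl (hγk k)),
          zero_rpow (by linarith [hγk k])]
        ring

/-- Integration by parts for the finite-part moments: the boundary term at `0` is discarded. -/
theorem powerMoment_sub_one_add_derivative (hT : T ≠ 0) (p : ℝ[X])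
    (hp : ∀ k ∈ p.support, γ + k ≠ 0) :
    γ * powerMoment T (γ - 1) p + powerMoment T γ (derivative p) = T ^ γ * p.eval T := by
  have hmon (k : ℕ) (a : ℝ) (hk : γ + k ≠ 0) :
      γ * powerMoment T (γ - 1) (monomial k a) + powerMoment T γ (derivative (monomial k a))
        = T ^ γ * (monomial k a).eval T := by
    rw [derivative_monomial, eval_monomial, powerMoment_monomial, powerMoment_monomial]
    rcases k with _ | n
    · simp only [Nat.cast_zero, add_zero, mul_zero, sub_add_cancel, pow_zero] at hk ⊢
      field_simp
    · rw [Nat.add_sub_cancel, show γ - 1 + ↑(n + 1) + 1 = γ + ↑(n + 1) by ring,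
        show γ + n + 1 = γ + ↑(n + 1) by push_cast; ring, rpow_add_natCast hT]
      field_simp
  conv_lhs => rw [p.as_sum_support]
  conv_rhs => rw [p.as_sum_support]
  simp only [map_sum, eval_finsetSum, mul_sum, ← sum_add_distrib]
  exact sum_congr rfl fun k hk => hmon k _ (hp k hk)

theorem powerMoment_iterate_derivative (hT : T ≠ 0) (hγ : -1 < γ) (n : ℕ) (f : ℝ[X])
    (hX : X ^ n ∣ f) (hXT : (X - C T) ^ n ∣ f) :
    powerMoment T γ (derivative^[n] f)
      = (-1) ^ n * (∏ m ∈ range n, (γ - m)) * powerMoment T (γ - n) f := by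
  induction n generalizing f with
  | zero => simp
  | succ n ih =>
    have hroot : f.IsRoot T := dvd_iff_isRoot.mp ((dvd_pow_self _ n.succ_ne_zero).trans hXT)
    have hsupp : ∀ k ∈ f.support, γ - n + k ≠ 0 := fun k hk => by
      have hnk : n + 1 ≤ k := by
        by_contra! hlt
        exact mem_support_iff.mp hk (X_pow_dvd_iff.mp hX k hlt)
      have : (n : ℝ) + 1 ≤ k := by exact_mod_cast hnk
      linarith
    have hparts := powerMoment_sub_one_add_derivative hT f hsupp
    rw [hroot.eq_zero, mul_zero] at hparts
    have hX' : X ^ n ∣ derivative f := by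
      simpa using pow_sub_one_dvd_derivative_of_pow_dvd hX
    have hXT' : (X - C T) ^ n ∣ derivative f := by
      simpa using pow_sub_one_dvd_derivative_of_pow_dvd hXT
    rw [Function.iterate_succ_apply, ih _ hX' hXT', eq_neg_of_add_eq_zero_right hparts,
      prod_range_succ, pow_succ]
    push_cast
    ring_nf

/-- A finite-part Beta integral: `∫₀ᵀ t^(γ+a) (t-T)^b dt = (-1)^b T^(γ+a+b+1) B(γ+a+1, b+1)`. -/
theorem powerMoment_X_pow_mul_X_sub_C_pow (hT : T ≠ 0) (a b : ℕ) (hγ : -1 < γ + a) :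
    powerMoment T γ (X ^ a * (X - C T) ^ b)
      = (-1) ^ b * b.factorial * T ^ (γ + a + b + 1) / ∏ m ∈ range (b + 1), (γ + a + 1 + m) := by
  induction b generalizing a with
  | zero => simp [powerMoment_X_pow]
  | succ b ih =>
    have hsplit : (X : ℝ[X]) ^ a * (X - C T) ^ (b + 1)
        = X ^ (a + 1) * (X - C T) ^ b - T • (X ^ a * (X - C T) ^ b) := by
      rw [← C_mul']; ring
    rw [hsplit, map_sub, map_smul, ih (a + 1) (by push_cast; linarith), ih a hγ, smul_eq_mul]
    have hpos (c : ℕ) (hc : -1 < γ + c) : 0 < ∏ m ∈ range (b + 1), (γ + c + 1 + m) :=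
      prod_pos fun m _ => by linarith [m.cast_nonneg (α := ℝ)]
    have hP := hpos a hγ
    have hQ := hpos (a + 1) (by push_cast; linarith)
    have hprod_succ : ∏ m ∈ range (b + 1 + 1), (γ + a + 1 + m)
        = (∏ m ∈ range (b + 1), (γ + a + 1 + m)) * (γ + a + 1 + (b + 1)) := by
      rw [prod_range_succ]; push_cast; ring
    have hprod_succ' : ∏ m ∈ range (b + 1 + 1), (γ + a + 1 + m)
        = (γ + a + 1) * ∏ m ∈ range (b + 1), (γ + ↑(a + 1) + 1 + m) := by
      rw [prod_range_succ', mul_comm]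
      congr 1
      · push_cast; ring
      · exact prod_congr rfl fun m _ => by push_cast; ring
    have hrel := hprod_succ'.symm.trans hprod_succ
    rw [show γ + ↑(a + 1) + b + 1 = (γ + a + b + 1) + 1 by push_cast; ring,
      show γ + a + ↑(b + 1) + 1 = (γ + a + b + 1) + 1 by push_cast; ring,
      rpow_add_one hT, pow_succ, Nat.factorial_succ, hprod_succ]
    generalize ∏ m ∈ range (b + 1), (γ + ↑a + 1 + ↑m) = P at *
    generalize ∏ m ∈ range (b + 1), (γ + ↑(a + 1) + 1 + ↑m) = Q at *
    have hx : γ + a + 1 + (b + 1) ≠ 0 := by linarith [b.cast_nonneg (α := ℝ)]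
    field_simp
    push_cast
    linear_combination b.factorial * T ^ (γ + a + b + 1) * hrel.symm

end powerMoment

theorem legendre_coeff_power_explicit (T α : ℝ) (hT : 0 < T) (hα : -(1/2 : ℝ) < α) (i : ℕ) :
    ∫ t in (0:ℝ)..T, t ^ α * legendreHat T i t
      = T ^ α * Real.sqrt T * (Real.sqrt (2 * i + 1)
          * (∏ m ∈ Finset.range i, (α - m))
          / (∏ m ∈ Finset.range (i + 1), (α + 1 + m))) := by
  have hα' : -1 < α := by linarith
  set f : ℝ[X] := X ^ i * (X - C T) ^ i
  have hintegrand : (fun t => t ^ α * legendreHat T i t)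
      = fun t => Real.sqrt ((2 * i + 1) / T) / (i.factorial * T ^ i)
          * (t ^ α * (derivative^[i] f).eval t) := by
    funext t
    rw [legendreHat, legendreP_two_mul_div_sub_one hT.ne']
    ring
  rw [hintegrand, intervalIntegral.integral_const_mul, integral_rpow_mul_eval hT.le hα',
    powerMoment_iterate_derivative hT.ne' hα' i f (dvd_mul_right _ _) (dvd_mul_left _ _),
    powerMoment_X_pow_mul_X_sub_C_pow hT.ne' i i (by simpa using hα'), sub_add_cancel,
    sqrt_div' _ hT.le, rpow_add_one hT.ne', rpow_add_natCast hT.ne']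
  field_simp
  rw [sq_sqrt hT.le, ← pow_mul, pow_mul', neg_one_sq, one_pow]
  ring
end

section
/- For $\alpha > -1/2$, $k \ge 1$, and $i \ge 0$, the Legendre coefficients satisfy $F_i^{\alpha+k} = \frac{T^k\,[(\alpha+1)(\alpha+2)\cdots(\alpha+k)]^2}{(\alpha-i+1)\cdots(\alpha-i+k)\,(\alpha+i+2)\cdots(\alpha+i+k+1)}\,F_i^\alpha$, provided the denominator is nonzero. -/
open Real

noncomputable def F (T α : ℝ) (i : ℕ) : ℝ := ∫ t in (0:ℝ)..T, t ^ α * legendreHat T i t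

/-!
After the substitution `t = T x`, `F T α i` is `T ^ (α + 1) * √((2i+1)/T)` times the moment
`J_i(α) = ∫₀¹ x ^ α P̃ᵢ(x) dx` of the shifted Legendre polynomial `P̃ᵢ(x) = Pᵢ(2x - 1)`.
From Rodrigues' formula, `P̃ᵢ` solves the Legendre equation `((x² - x) P̃ᵢ')' = i(i+1) P̃ᵢ` and
`P̃ᵢ(1) = 1`. Integrating the equation against `x ^ (α + 1)` and integrating by parts
(all boundary terms at `0` vanish because `α > -1`, and `x² - x` vanishes at `1`) gives
`(α + 1 - i)(α + 2 + i) J_i(α + 1) = (α + 1)² J_i(α)`; iterate this `k` times.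
-/

open Polynomial intervalIntegral
open scoped Nat

namespace Polynomial

theorem iterate_derivative_mul_of_natDegree_le_two {R : Type*} [CommSemiring R] {q : R[X]}
    (hq : q.natDegree ≤ 2) (p : R[X]) (n : ℕ) :
    derivative^[n] (q * p) = q * derivative^[n] p + n • (derivative q * derivative^[n - 1] p)
      + n.choose 2 • (derivative^[2] q * derivative^[n - 2] p) := by
  rw [mul_comm, iterate_derivative_mul]
  have h_of_three_le (k) (hk : k ∉ Finset.range 3) :
      n.choose k • (derivative^[n - k] p * derivative^[k] q) = 0 := by
    rw [Finset.mem_range, not_lt] at hk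
    rw [iterate_derivative_eq_zero (by omega : q.natDegree < k), mul_zero, smul_zero]
  have h_of_lt (k) (hk : k ∉ Finset.range n.succ) :
      n.choose k • (derivative^[n - k] p * derivative^[k] q) = 0 := by
    rw [Finset.mem_range, not_lt] at hk
    rw [Nat.choose_eq_zero_of_lt (by omega), zero_smul]
  rw [Finset.sum_congr_of_eq_on_inter (fun k _ hk => h_of_three_le k hk)
    (fun k _ hk => h_of_lt k hk) fun _ _ _ => rfl]
  simp [Finset.sum_range_succ, mul_comm]

section CommRing

variable {R : Type*} [CommRing R]

theorem eval_iterate_derivative_X_sub_C_pow_mul (t : R) (n : ℕ) (p : R[X]) :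
    (derivative^[n] ((X - C t) ^ n * p)).eval t = n ! * p.eval t := by
  rw [iterate_derivative_mul, eval_finsetSum,
    Finset.sum_eq_single_of_mem _ (Finset.mem_range.mpr n.succ_pos)]
  · simp [iterate_derivative_X_sub_pow_self]
  · intro k hk hk0
    rw [iterate_derivative_X_sub_pow, Nat.sub_sub_self (Finset.mem_range_succ_iff.mp hk)]
    simp [zero_pow hk0]

theorem derivative_mul_pow_self (q : R[X]) (n : ℕ) :
    derivative (q * q ^ n) = ((n + 1 : ℕ) : R[X]) * (derivative q * q ^ n) := by
  rw [← pow_succ' q n, derivative_pow_succ]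
  simp only [map_add, map_natCast, map_one]
  push_cast
  ring

theorem two_mul_derivative_mul_derivative_iterate_derivative_pow {q : R[X]}
    (hq : q.natDegree ≤ 2) (n : ℕ) :
    2 * derivative (q * derivative (derivative^[n] (q ^ n)))
      = (n * (n + 1) : R[X]) * derivative^[2] q * derivative^[n] (q ^ n) := by
  have hq' : (derivative q).natDegree ≤ 2 := (natDegree_derivative_le q).trans (by omega)
  have hq''' : derivative^[2] (derivative q) = 0 :=
    iterate_derivative_eq_zero ((natDegree_derivative_le q).trans_lt (by omega))
  have hchoose : (((n + 2).choose 2 : ℕ) : R[X]) * 2 = (n + 2) * (n + 1) := by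
    have h := Nat.add_one_mul_choose_eq (n + 1) 1
    rw [Nat.choose_one_right] at h
    simpa using congrArg (Nat.cast : ℕ → R[X])
      (by linarith : (n + 2).choose 2 * 2 = (n + 2) * (n + 1))
  -- differentiate `(q qⁿ)' = (n + 1) q' qⁿ` another `n + 1` times with the Leibniz rule
  have key := congrArg derivative^[n + 1] (derivative_mul_pow_self q n)
  rw [← Function.iterate_succ_apply, iterate_derivative_natCast_mul,
    iterate_derivative_mul_of_natDegree_le_two hq, iterate_derivative_mul_of_natDegree_le_two hq',
    hq'''] at key
  simp only [Nat.succ_eq_add_one, show n + 1 + 1 - 2 = n by omega, Nat.add_sub_cancel,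
    zero_mul, smul_zero, add_zero, nsmul_eq_mul] at key
  change _ = _ * (_ + _ * (derivative^[2] q * _)) at key
  rw [derivative_mul, ← Function.iterate_succ_apply' derivative,
    ← Function.iterate_succ_apply' derivative]
  push_cast at key hchoose ⊢
  linear_combination 2 * key - (derivative^[2] q * derivative^[n] (q ^ n)) * hchoose

end CommRing

theorem iteratedDeriv_eval_s6 {𝕜 : Type*} [NontriviallyNormedField 𝕜] (p : 𝕜[X]) (n : ℕ) :
    iteratedDeriv n (fun x => p.eval x) = fun x => (derivative^[n] p).eval x := by
  induction n with
  | zero => rfl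
  | succ n ih =>
    rw [iteratedDeriv_succ, ih, Function.iterate_succ_apply']
    funext x
    exact Polynomial.deriv _

end Polynomial

/-- `Pᵢ(2x - 1)` by Rodrigues' formula; this is `(-1) ^ i` times `Polynomial.shiftedLegendre i`. -/
noncomputable def legendreShifted (i : ℕ) : ℝ[X] :=
  C (i ! : ℝ)⁻¹ * derivative^[i] ((X ^ 2 - X) ^ i)

theorem legendreShifted_eval_one (i : ℕ) : (legendreShifted i).eval 1 = 1 := by
  have h : ((X : ℝ[X]) ^ 2 - X) ^ i = (X - C 1) ^ i * X ^ i := by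
    rw [← mul_pow, map_one]
    ring
  rw [legendreShifted, eval_mul, h, eval_iterate_derivative_X_sub_C_pow_mul]
  simp [Nat.cast_ne_zero.mpr i.factorial_ne_zero]

theorem derivative_X_sq_sub_X_mul_derivative_legendreShifted (i : ℕ) :
    derivative ((X ^ 2 - X) * derivative (legendreShifted i))
      = (i * (i + 1) : ℝ[X]) * legendreShifted i := by
  have hq : ((X : ℝ[X]) ^ 2 - X).natDegree ≤ 2 := by compute_degree
  have hq'' : derivative^[2] ((X : ℝ[X]) ^ 2 - X) = 2 := by
    simp [one_add_one_eq_two, map_ofNat]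
  have h := two_mul_derivative_mul_derivative_iterate_derivative_pow hq i
  rw [hq''] at h
  refine mul_left_cancel₀ (two_ne_zero (α := ℝ[X])) ?_
  rw [legendreShifted, derivative_C_mul, mul_left_comm, derivative_C_mul, mul_left_comm, h]
  ring

theorem legendreP_two_mul_sub_one (i : ℕ) (x : ℝ) :
    legendreP i (2 * x - 1) = (legendreShifted i).eval x := by
  have hcomp : (fun x : ℝ => ((2 * x - 1) ^ 2 - 1) ^ i)
      = fun x => 4 ^ i * (((X : ℝ[X]) ^ 2 - X) ^ i).eval x := by
    funext x
    simp only [eval_pow, eval_sub, eval_X]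
    rw [← mul_pow]
    ring
  have hf : ContDiff ℝ i (fun y : ℝ => ((y - 1) ^ 2 - 1) ^ i) := by fun_prop
  have hchain := congrFun (iteratedDeriv_comp_const_mul hf 2) x
  rw [iteratedDeriv_comp_sub_const i (fun y : ℝ => (y ^ 2 - 1) ^ i),
    show (fun x : ℝ => ((2 * x - 1) ^ 2 - 1) ^ i) = _ from hcomp,
    iteratedDeriv_const_mul_field, iteratedDeriv_eval_s6, show (4 : ℝ) ^ i = 2 ^ i * 2 ^ i by
      rw [← mul_pow]; norm_num] at hchain
  have hD : iteratedDeriv i (fun y : ℝ => (y ^ 2 - 1) ^ i) (2 * x - 1)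
      = 2 ^ i * (derivative^[i] (((X : ℝ[X]) ^ 2 - X) ^ i)).eval x :=
    mul_left_cancel₀ (pow_ne_zero i two_ne_zero) (by simpa [mul_assoc] using hchain.symm)
  rw [legendreP, legendreShifted, eval_mul, eval_C, hD]
  field_simp

theorem intervalIntegrable_rpow_mul_eval {β : ℝ} (hβ : -1 < β) (p : ℝ[X]) :
    IntervalIntegrable (fun x => x ^ β * p.eval x) MeasureTheory.volume 0 1 :=
  (intervalIntegrable_rpow' hβ).mul_continuousOn p.continuous.continuousOn

theorem integral_rpow_mul_eval_derivative {β : ℝ} (hβ : 0 < β) (p : ℝ[X]) :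
    ∫ x in (0 : ℝ)..1, x ^ β * (derivative p).eval x
      = p.eval 1 - β * ∫ x in (0 : ℝ)..1, x ^ (β - 1) * p.eval x := by
  have hu : ContinuousOn (fun x : ℝ => x ^ β) (Set.uIcc 0 1) :=
    continuousOn_id.rpow_const fun _ _ => Or.inr hβ.le
  rw [integral_mul_deriv_eq_deriv_mul_of_hasDerivAt hu p.continuous.continuousOn
    (fun x hx => Real.hasDerivAt_rpow_const (Or.inl (by simp at hx; exact hx.1.ne')))
    (fun x _ => p.hasDerivAt x) ((intervalIntegrable_rpow' (by linarith)).const_mul β)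
    ((derivative p).continuous.intervalIntegrable _ _)]
  simp [Real.zero_rpow hβ.ne', mul_assoc, integral_const_mul]

theorem integral_rpow_mul_X_sq_sub_X_mul {β : ℝ} (hβ : -1 < β) (p : ℝ[X]) :
    ∫ x in (0 : ℝ)..1, x ^ β * ((X ^ 2 - X) * p).eval x
      = (∫ x in (0 : ℝ)..1, x ^ (β + 2) * p.eval x)
        - ∫ x in (0 : ℝ)..1, x ^ (β + 1) * p.eval x := by
  rw [← integral_sub (intervalIntegrable_rpow_mul_eval (by linarith) p)
    (intervalIntegrable_rpow_mul_eval (by linarith) p)]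
  refine integral_congr fun x hx => ?_
  have hx0 : 0 ≤ x := by simp at hx; exact hx.1
  rw [show β + 2 = β + 1 + 1 by ring, Real.rpow_add_one' hx0 (by linarith),
    Real.rpow_add_one' hx0 (by linarith)]
  simp only [eval_mul, eval_sub, eval_pow, eval_X]
  ring

noncomputable def legendreShiftedMoment (i : ℕ) (β : ℝ) : ℝ :=
  ∫ x in (0 : ℝ)..1, x ^ β * (legendreShifted i).eval x

theorem legendreShiftedMoment_succ {β : ℝ} (hβ : -1 < β) (i : ℕ) :
    (β + 1 - i) * (β + 2 + i) * legendreShiftedMoment i (β + 1)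
      = (β + 1) ^ 2 * legendreShiftedMoment i β := by
  set M := legendreShifted i
  have hM1 : M.eval 1 = 1 := legendreShifted_eval_one i
  set R : ℝ[X] := (X ^ 2 - X) * derivative M
  have hR_ibp : ∫ x in (0 : ℝ)..1, x ^ (β + 1) * (derivative R).eval x
      = -(β + 1) * ∫ x in (0 : ℝ)..1, x ^ β * R.eval x := by
    have hR1 : R.eval 1 = 0 := by simp [R]
    rw [integral_rpow_mul_eval_derivative (by linarith), add_sub_cancel_right, hR1, zero_sub,
      neg_mul]
  have hR_ode : ∫ x in (0 : ℝ)..1, x ^ (β + 1) * (derivative R).eval x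
      = i * (i + 1) * legendreShiftedMoment i (β + 1) := by
    rw [derivative_X_sq_sub_X_mul_derivative_legendreShifted, legendreShiftedMoment,
      ← integral_const_mul]
    refine integral_congr fun x _ => ?_
    simp only [eval_mul, eval_add, eval_natCast, eval_one]
    ring
  have hM_ibp_two : ∫ x in (0 : ℝ)..1, x ^ (β + 2) * (derivative M).eval x
      = 1 - (β + 2) * legendreShiftedMoment i (β + 1) := by
    rw [integral_rpow_mul_eval_derivative (by linarith), hM1, show β + 2 - 1 = β + 1 by ring]
    rfl
  have hM_ibp_one : ∫ x in (0 : ℝ)..1, x ^ (β + 1) * (derivative M).eval x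
      = 1 - (β + 1) * legendreShiftedMoment i β := by
    rw [integral_rpow_mul_eval_derivative (by linarith), hM1, add_sub_cancel_right]
    rfl
  rw [integral_rpow_mul_X_sq_sub_X_mul hβ, hM_ibp_two, hM_ibp_one, hR_ode] at hR_ibp
  linear_combination -hR_ibp

theorem F_eq_rpow_mul_legendreShiftedMoment {T : ℝ} (hT : 0 < T) (α : ℝ) (i : ℕ) :
    F T α i = T ^ (α + 1) * √((2 * i + 1) / T) * legendreShiftedMoment i α := by
  have hsub := smul_integral_comp_mul_left (fun t => t ^ α * legendreHat T i t) T (a := 0) (b := 1)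
  rw [mul_zero, mul_one] at hsub
  rw [F, ← hsub, smul_eq_mul, legendreShiftedMoment, ← integral_const_mul, ← integral_const_mul]
  refine integral_congr fun x hx => ?_
  have hx0 : 0 ≤ x := by simp at hx; exact hx.1
  rw [legendreHat, show 2 * (T * x) / T - 1 = 2 * x - 1 by field_simp,
    legendreP_two_mul_sub_one, Real.mul_rpow hT.le hx0, Real.rpow_add_one hT.ne']
  ring

theorem F_add_one {T : ℝ} (hT : 0 < T) {β : ℝ} (hβ : -1 < β) (i : ℕ) :
    (β + 1 - i) * (β + 2 + i) * F T (β + 1) i = T * (β + 1) ^ 2 * F T β i := by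
  rw [F_eq_rpow_mul_legendreShiftedMoment hT, F_eq_rpow_mul_legendreShiftedMoment hT,
    Real.rpow_add_one hT.ne' (β + 1)]
  linear_combination T ^ (β + 1) * T * √((2 * i + 1) / T) * legendreShiftedMoment_succ hβ i

theorem prod_mul_prod_mul_F_add_nat {T : ℝ} (hT : 0 < T) {α : ℝ} (hα : -1 < α) (i k : ℕ) :
    (∏ m ∈ Finset.Icc 1 k, (α - i + m)) * (∏ m ∈ Finset.Icc 1 k, (α + i + 1 + m))
        * F T (α + k) i
      = T ^ k * (∏ m ∈ Finset.Icc 1 k, (α + m)) ^ 2 * F T α i := by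
  induction k with
  | zero => simp
  | succ k ih =>
    have hstep := F_add_one hT (β := α + k) (by linarith [k.cast_nonneg (α := ℝ)]) i
    rw [show α + ((k + 1 : ℕ) : ℝ) = α + k + 1 by push_cast; ring]
    simp only [Finset.prod_Icc_succ_top (Nat.le_add_left 1 k)]
    push_cast
    linear_combination
      (∏ m ∈ Finset.Icc 1 k, (α - i + m)) * (∏ m ∈ Finset.Icc 1 k, (α + i + 1 + m)) * hstep
        + T * (α + k + 1) ^ 2 * ih

theorem legendre_coeff_power_shift_general (T α : ℝ) (hT : 0 < T) (hα : -(1/2 : ℝ) < α)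
    (k : ℕ) (i : ℕ)
    (hden : (∏ m ∈ Finset.Icc 1 k, (α - i + m)) * (∏ m ∈ Finset.Icc 1 k, (α + i + 1 + m)) ≠ 0) :
    F T (α + k) i
      = T ^ (k : ℕ) * (∏ m ∈ Finset.Icc 1 k, (α + m)) ^ 2
          / ((∏ m ∈ Finset.Icc 1 k, (α - i + m)) * (∏ m ∈ Finset.Icc 1 k, (α + i + 1 + m)))
          * F T α i := by
  rw [div_mul_eq_mul_div, eq_div_iff hden, mul_comm]
  exact prod_mul_prod_mul_F_add_nat hT (by linarith) i k

theorem legendre_coeff_power_shift (T α : ℝ) (hT : 0 < T) (hα : -(1/2 : ℝ) < α)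
    (k : ℕ) (hk : 1 ≤ k) (i : ℕ)
    (hden : (∏ m ∈ Finset.Icc 1 k, (α - i + m)) * (∏ m ∈ Finset.Icc 1 k, (α + i + 1 + m)) ≠ 0) :
    F T (α + k) i
      = T ^ (k : ℕ) * (∏ m ∈ Finset.Icc 1 k, (α + m)) ^ 2
          / ((∏ m ∈ Finset.Icc 1 k, (α - i + m)) * (∏ m ∈ Finset.Icc 1 k, (α + i + 1 + m)))
          * F T α i :=
  legendre_coeff_power_shift_general T α hT hα k i hden
end

section
/- Relative to the normalized shifted Legendre polynomials, the matrix elements of the fractional integration operator satisfy the parity symmetry $P_{ij}^{-\beta} = (-1)^{i+j} P_{ji}^{-\beta}$ for all $i,j \ge 0$ and $\beta > 0$. -/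
open Real

/-- Matrix element of the left-sided Riemann–Liouville fractional integral
relative to the normalized shifted Legendre polynomials. -/
noncomputable def Pmat (T β : ℝ) (i j : ℕ) : ℝ :=
  ∫ t in (0:ℝ)..T, legendreHat T i t
    * ((1 / Real.Gamma β) * ∫ τ in (0:ℝ)..t, legendreHat T j τ * (t - τ) ^ (β - 1))

section Aux

open MeasureTheory Set intervalIntegral

lemma legendreP_neg (i : ℕ) (x : ℝ) : legendreP i (-x) = (-1) ^ i * legendreP i x := by
  have h := iteratedDeriv_comp_neg i (fun y : ℝ => (y ^ 2 - 1) ^ i) x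
  simp only [neg_sq, smul_eq_mul] at h
  have hsq : ((-1 : ℝ)) ^ i * ((-1 : ℝ)) ^ i = 1 := by
    rw [← mul_pow]; norm_num
  have h2 : iteratedDeriv i (fun y : ℝ => (y ^ 2 - 1) ^ i) (-x)
      = (-1 : ℝ) ^ i * iteratedDeriv i (fun y : ℝ => (y ^ 2 - 1) ^ i) x := by
    rw [h, ← mul_assoc, hsq, one_mul]
  unfold legendreP
  rw [h2]; ring

lemma legendreP_continuous (i : ℕ) : Continuous (legendreP i) := by
  apply Continuous.mul continuous_const
  exact ContDiff.continuous_iteratedDeriv i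
    (((contDiff_id.pow 2).sub contDiff_const).pow i) le_top

lemma legendreHat_continuous (T : ℝ) (i : ℕ) : Continuous (legendreHat T i) := by
  apply Continuous.mul continuous_const
  exact (legendreP_continuous i).comp
    (((continuous_const.mul continuous_id).div_const T).sub continuous_const)

lemma legendreHat_reflect (T : ℝ) (hT : T ≠ 0) (i : ℕ) (t : ℝ) :
    legendreHat T i (T - t) = (-1) ^ i * legendreHat T i t := by
  unfold legendreHat
  have h : 2 * (T - t) / T - 1 = -(2 * t / T - 1) := by field_simp; ring
  rw [h, legendreP_neg]; ring

lemma reflect_step (T β : ℝ) (f g : ℝ → ℝ) (i j : ℕ)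
    (hfr : ∀ t, f (T - t) = (-1 : ℝ) ^ i * f t)
    (hgr : ∀ t, g (T - t) = (-1 : ℝ) ^ j * g t) :
    (∫ t in (0:ℝ)..T, f t * ∫ τ in (0:ℝ)..t, g τ * (t - τ) ^ (β - 1))
      = (-1 : ℝ) ^ (i + j) * ∫ t in (0:ℝ)..T, f t * ∫ σ in t..T, g σ * (σ - t) ^ (β - 1) := by
  have h1 := intervalIntegral.integral_comp_sub_left
    (fun t => f t * ∫ τ in (0:ℝ)..t, g τ * (t - τ) ^ (β - 1)) T (a := 0) (b := T)
  simp only [sub_self, sub_zero] at h1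
  rw [← h1, ← intervalIntegral.integral_const_mul]
  apply intervalIntegral.integral_congr
  intro x _
  show f (T - x) * (∫ τ in (0:ℝ)..(T - x), g τ * (T - x - τ) ^ (β - 1))
      = (-1 : ℝ) ^ (i + j) * (f x * ∫ σ in x..T, g σ * (σ - x) ^ (β - 1))
  have h2 := intervalIntegral.integral_comp_sub_left
    (fun τ => g τ * (T - x - τ) ^ (β - 1)) T (a := x) (b := T)
  simp only [sub_self] at h2
  rw [← h2]
  have h3 : ∀ s : ℝ, g (T - s) * (T - x - (T - s)) ^ (β - 1)
      = (-1 : ℝ) ^ j * (g s * (s - x) ^ (β - 1)) := by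
    intro s
    rw [hgr s, show T - x - (T - s) = s - x by ring]; ring
  rw [intervalIntegral.integral_congr (g := fun s => (-1 : ℝ) ^ j * (g s * (s - x) ^ (β - 1)))
      (fun s _ => h3 s),
    intervalIntegral.integral_const_mul, hfr x, pow_add]
  ring

lemma swap_kernel (T β : ℝ) (hT : 0 < T) (hβ : 0 < β) (f g : ℝ → ℝ)
    (hf : Continuous f) (hg : Continuous g) :
    (∫ t in (0:ℝ)..T, f t * ∫ σ in t..T, g σ * (σ - t) ^ (β - 1))
      = ∫ σ in (0:ℝ)..T, g σ * ∫ t in (0:ℝ)..σ, f t * (σ - t) ^ (β - 1) := by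
  set F : ℝ → ℝ → ℝ := fun t σ => if t < σ then f t * g σ * (σ - t) ^ (β - 1) else 0 with hF
  -- basic integrability of the rpow kernel
  have hrpow_int : ∀ t : ℝ, IntervalIntegrable (fun σ => (σ - t) ^ (β - 1)) volume t T := by
    intro t
    have h0 := intervalIntegral.intervalIntegrable_rpow' (a := 0) (b := T - t) (r := β - 1)
      (by linarith)
    have h1 := h0.comp_sub_right t
    simpa using h1
  have hker_int : ∀ t : ℝ,
      IntervalIntegrable (fun σ => f t * g σ * (σ - t) ^ (β - 1)) volume t T := by
    intro t
    exact (hrpow_int t).continuousOn_mul ((continuous_const.mul hg).continuousOn)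
  -- measurability
  have hFm : AEStronglyMeasurable (Function.uncurry F)
      ((volume.restrict (Set.Ioc (0:ℝ) T)).prod (volume.restrict (Set.Ioc (0:ℝ) T))) := by
    have hEq : Function.uncurry F = fun p : ℝ × ℝ =>
        if p.1 < p.2 then f p.1 * g p.2 * Real.exp (Real.log (p.2 - p.1) * (β - 1)) else 0 := by
      funext p
      simp only [Function.uncurry, hF]
      split_ifs with h
      · congr 1
        rw [Real.rpow_def_of_pos (by linarith : (0:ℝ) < p.2 - p.1)]
      · rfl
    rw [hEq]
    apply Measurable.aestronglyMeasurable
    exact Measurable.ite (measurableSet_lt measurable_fst measurable_snd)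
      (((hf.measurable.comp measurable_fst).mul (hg.measurable.comp measurable_snd)).mul
        (Real.measurable_exp.comp
          ((Real.measurable_log.comp (measurable_snd.sub measurable_fst)).mul_const _)))
      measurable_const
  -- indicator descriptions
  have hind : ∀ t : ℝ, F t = (Set.Ioi t).indicator (fun σ => f t * g σ * (σ - t) ^ (β - 1)) := by
    intro t; funext σ
    simp [hF, Set.indicator_apply, Set.mem_Ioi]
  have hind' : ∀ σ : ℝ, (fun t => F t σ)
      = (Set.Iio σ).indicator (fun t => f t * g σ * (σ - t) ^ (β - 1)) := by
    intro σ; funext t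
    simp [hF, Set.indicator_apply, Set.mem_Iio]
  have hset : ∀ t ∈ Set.Ioc (0:ℝ) T, Set.Ioi t ∩ Set.Ioc 0 T = Set.Ioc t T := by
    intro t ht; ext σ
    simp only [Set.mem_inter_iff, Set.mem_Ioi, Set.mem_Ioc]
    constructor
    · rintro ⟨h1, _, h3⟩; exact ⟨h1, h3⟩
    · rintro ⟨h1, h3⟩; exact ⟨h1, lt_trans ht.1 h1, h3⟩
  have hset' : ∀ σ ∈ Set.Ioc (0:ℝ) T, Set.Iio σ ∩ Set.Ioc 0 T = Set.Ioo 0 σ := by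
    intro σ hσ; ext t
    simp only [Set.mem_inter_iff, Set.mem_Iio, Set.mem_Ioc, Set.mem_Ioo]
    constructor
    · rintro ⟨h1, h2, _⟩; exact ⟨h2, h1⟩
    · rintro ⟨h2, h1⟩; exact ⟨h1, h2, le_trans (le_of_lt h1) hσ.2⟩
  -- slice integrability
  have hslice : ∀ t ∈ Set.Ioc (0:ℝ) T, Integrable (F t) (volume.restrict (Set.Ioc (0:ℝ) T)) := by
    intro t ht
    rw [hind t, integrable_indicator_iff measurableSet_Ioi, IntegrableOn,
      Measure.restrict_restrict measurableSet_Ioi, hset t ht]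
    exact (hker_int t).1
  -- bounds
  obtain ⟨Cf, hCf⟩ := (isCompact_Icc (a := (0:ℝ)) (b := T)).exists_bound_of_continuousOn
    hf.continuousOn
  obtain ⟨Cg, hCg⟩ := (isCompact_Icc (a := (0:ℝ)) (b := T)).exists_bound_of_continuousOn
    hg.continuousOn
  have hCf0 : 0 ≤ Cf := le_trans (norm_nonneg _) (hCf 0 (Set.left_mem_Icc.2 hT.le))
  have hCg0 : 0 ≤ Cg := le_trans (norm_nonneg _) (hCg 0 (Set.left_mem_Icc.2 hT.le))
  -- norm integral bound
  have hbound : ∀ t ∈ Set.Ioc (0:ℝ) T,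
      (∫ σ, ‖F t σ‖ ∂(volume.restrict (Set.Ioc (0:ℝ) T))) ≤ Cf * Cg * (T ^ β / β) := by
    intro t ht
    have hmem : t ∈ Set.Icc (0:ℝ) T := ⟨ht.1.le, ht.2⟩
    have hfun : (fun σ => ‖F t σ‖)
        = fun σ => (Set.Ioi t).indicator (fun σ => ‖f t * g σ * (σ - t) ^ (β - 1)‖) σ := by
      funext σ
      rw [hind t, norm_indicator_eq_indicator_norm]
    have heq1 : (∫ σ, ‖F t σ‖ ∂(volume.restrict (Set.Ioc (0:ℝ) T)))
        = ∫ σ in Set.Ioc t T, ‖f t * g σ * (σ - t) ^ (β - 1)‖ := by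
      rw [hfun, MeasureTheory.integral_indicator measurableSet_Ioi,
        Measure.restrict_restrict measurableSet_Ioi, hset t ht]
    rw [heq1]
    have int1 : IntegrableOn (fun σ => ‖f t * g σ * (σ - t) ^ (β - 1)‖) (Set.Ioc t T) volume :=
      ((hker_int t).norm).1
    have int2 : IntegrableOn (fun σ => Cf * Cg * (σ - t) ^ (β - 1)) (Set.Ioc t T) volume :=
      ((hrpow_int t).const_mul (Cf * Cg)).1
    have hle : (∫ σ in Set.Ioc t T, ‖f t * g σ * (σ - t) ^ (β - 1)‖)
        ≤ ∫ σ in Set.Ioc t T, Cf * Cg * (σ - t) ^ (β - 1) := by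
      apply setIntegral_mono_on int1 int2 measurableSet_Ioc
      intro σ hσ
      have hX : (0:ℝ) ≤ (σ - t) ^ (β - 1) := Real.rpow_nonneg (by linarith [hσ.1]) _
      have h1 := hCf t hmem
      have h2 := hCg σ ⟨le_trans ht.1.le hσ.1.le, hσ.2⟩
      calc ‖f t * g σ * (σ - t) ^ (β - 1)‖
          = ‖f t‖ * ‖g σ‖ * ‖(σ - t) ^ (β - 1)‖ := by rw [norm_mul, norm_mul]
        _ ≤ Cf * Cg * (σ - t) ^ (β - 1) := by
            rw [Real.norm_eq_abs ((σ - t) ^ (β - 1)), abs_of_nonneg hX]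
            exact mul_le_mul (mul_le_mul h1 h2 (norm_nonneg _) hCf0) le_rfl hX
              (mul_nonneg hCf0 hCg0)
    refine le_trans hle ?_
    have hval : (∫ σ in Set.Ioc t T, Cf * Cg * (σ - t) ^ (β - 1))
        = Cf * Cg * ((T - t) ^ β / β) := by
      rw [← intervalIntegral.integral_of_le ht.2, intervalIntegral.integral_const_mul]
      congr 1
      have h4 := intervalIntegral.integral_comp_sub_right (fun x => x ^ (β - 1)) t
        (a := t) (b := T)
      simp only [sub_self] at h4
      rw [h4, integral_rpow (Or.inl (by linarith : (-1:ℝ) < β - 1)),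
        show β - 1 + 1 = β by ring, Real.zero_rpow hβ.ne', sub_zero]
    rw [hval]
    have h5 : (T - t) ^ β ≤ T ^ β :=
      Real.rpow_le_rpow (by linarith [ht.2]) (by linarith [ht.1]) hβ.le
    have h6 : (T - t) ^ β / β ≤ T ^ β / β := by gcongr
    exact mul_le_mul_of_nonneg_left h6 (mul_nonneg hCf0 hCg0)
  -- product integrability
  have hInt : Integrable (Function.uncurry F)
      ((volume.restrict (Set.Ioc (0:ℝ) T)).prod (volume.restrict (Set.Ioc (0:ℝ) T))) := by
    rw [MeasureTheory.integrable_prod_iff hFm]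
    constructor
    · refine Filter.eventually_of_mem (self_mem_ae_restrict measurableSet_Ioc) ?_
      intro t ht
      exact hslice t ht
    · refine ⟨(hFm.norm).integral_prod_right', ?_⟩
      apply HasFiniteIntegral.restrict_of_bounded (C := Cf * Cg * (T ^ β / β))
        (measure_Ioc_lt_top)
      refine Filter.eventually_of_mem (self_mem_ae_restrict measurableSet_Ioc) ?_
      intro t ht
      have h0 : (0:ℝ) ≤ ∫ σ, ‖Function.uncurry F (t, σ)‖
          ∂(volume.restrict (Set.Ioc (0:ℝ) T)) :=
        MeasureTheory.integral_nonneg fun σ => norm_nonneg _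
      rw [Real.norm_eq_abs, abs_of_nonneg h0]
      exact hbound t ht
  have hswap := MeasureTheory.integral_integral_swap hInt
  -- left side
  have hL : (∫ t in (0:ℝ)..T, f t * ∫ σ in t..T, g σ * (σ - t) ^ (β - 1))
      = ∫ t, (∫ σ, F t σ ∂(volume.restrict (Set.Ioc (0:ℝ) T)))
          ∂(volume.restrict (Set.Ioc (0:ℝ) T)) := by
    rw [intervalIntegral.integral_of_le hT.le]
    apply setIntegral_congr_fun measurableSet_Ioc
    intro t ht
    show f t * (∫ σ in t..T, g σ * (σ - t) ^ (β - 1))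
        = ∫ σ, F t σ ∂(volume.restrict (Set.Ioc (0:ℝ) T))
    rw [hind t, MeasureTheory.integral_indicator measurableSet_Ioi,
      Measure.restrict_restrict measurableSet_Ioi, hset t ht,
      ← intervalIntegral.integral_of_le ht.2]
    have hfun2 : (fun σ => f t * g σ * (σ - t) ^ (β - 1))
        = fun σ => f t * (g σ * (σ - t) ^ (β - 1)) := by
      funext σ; ring
    rw [hfun2, intervalIntegral.integral_const_mul]
  -- right side
  have hR : (∫ σ, (∫ t, F t σ ∂(volume.restrict (Set.Ioc (0:ℝ) T)))
          ∂(volume.restrict (Set.Ioc (0:ℝ) T)))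
      = ∫ σ in (0:ℝ)..T, g σ * ∫ t in (0:ℝ)..σ, f t * (σ - t) ^ (β - 1) := by
    rw [intervalIntegral.integral_of_le hT.le]
    apply setIntegral_congr_fun measurableSet_Ioc
    intro σ hσ
    show (∫ t, F t σ ∂(volume.restrict (Set.Ioc (0:ℝ) T)))
        = g σ * ∫ t in (0:ℝ)..σ, f t * (σ - t) ^ (β - 1)
    rw [hind' σ, MeasureTheory.integral_indicator measurableSet_Iio,
      Measure.restrict_restrict measurableSet_Iio, hset' σ hσ,
      ← MeasureTheory.integral_Ioc_eq_integral_Ioo,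
      ← intervalIntegral.integral_of_le hσ.1.le]
    have hfun3 : (fun t => f t * g σ * (σ - t) ^ (β - 1))
        = fun t => g σ * (f t * (σ - t) ^ (β - 1)) := by
      funext t; ring
    rw [hfun3, intervalIntegral.integral_const_mul]
  rw [hL, hswap, hR]

end Aux

theorem fractional_integral_matrix_parity (T β : ℝ) (hT : 0 < T) (hβ : 0 < β) (i j : ℕ) :
    Pmat T β i j = (-1) ^ (i + j) * Pmat T β j i := by
  have hTne : T ≠ 0 := ne_of_gt hT
  have hP : ∀ a b : ℕ, Pmat T β a b = (1 / Real.Gamma β)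
      * ∫ t in (0:ℝ)..T, legendreHat T a t
        * ∫ τ in (0:ℝ)..t, legendreHat T b τ * (t - τ) ^ (β - 1) := by
    intro a b
    unfold Pmat
    have hfun : (fun t => legendreHat T a t
          * ((1 / Real.Gamma β) * ∫ τ in (0:ℝ)..t, legendreHat T b τ * (t - τ) ^ (β - 1)))
        = fun t => (1 / Real.Gamma β) * (legendreHat T a t
          * ∫ τ in (0:ℝ)..t, legendreHat T b τ * (t - τ) ^ (β - 1)) := by
      funext t; ring
    rw [hfun, intervalIntegral.integral_const_mul]
  rw [hP i j, hP j i,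
    reflect_step T β (legendreHat T i) (legendreHat T j) i j
      (fun t => legendreHat_reflect T hTne i t) (fun t => legendreHat_reflect T hTne j t),
    swap_kernel T β hT hβ (legendreHat T i) (legendreHat T j)
      (legendreHat_continuous T i) (legendreHat_continuous T j)]
  ring
end

section
/- The squared $L_2([0,T]^2)$-norm of the covariance function of fractional Brownian motion equals $\|R_H\|^2_{L_2([0,T]^2)} = \frac{T^{4H+2}}{4}\left(\frac{4H+3}{(2H+1)(4H+1)} - \frac{4\,\Gamma(2H+1)^2}{\Gamma(4H+3)}\right)$. -/
open Real intervalIntegral MeasureTheory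

lemma cont_rpow (e : ℝ) (he : 0 ≤ e) : Continuous (fun x : ℝ => x ^ e) :=
  continuous_id.rpow_const (fun _ => Or.inr he)

lemma cont_abs_rpow (t e : ℝ) (he : 0 ≤ e) : Continuous (fun τ : ℝ => |t - τ| ^ e) :=
  ((continuous_const.sub continuous_id).abs).rpow_const (fun _ => Or.inr he)

lemma integral_rpow0 {e : ℝ} (T : ℝ) (he : 0 < e) :
    ∫ x in (0:ℝ)..T, x ^ e = T ^ (e+1) / (e+1) := by
  rw [integral_rpow (Or.inl (by linarith))]
  rw [Real.zero_rpow (by positivity)]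
  ring

lemma integral_abs_rpow {e t T : ℝ} (he : 0 < e) (hT : 0 ≤ T) (ht : 0 ≤ t) (htT : t ≤ T) :
    ∫ τ in (0:ℝ)..T, |t - τ| ^ e = (t ^ (e+1) + (T - t) ^ (e+1)) / (e+1) := by
  have hint : ∀ a b : ℝ, IntervalIntegrable (fun τ => |t - τ| ^ e) volume a b :=
    fun a b => (cont_abs_rpow t e he.le).intervalIntegrable a b
  have h1 : ∫ τ in (0:ℝ)..t, |t - τ| ^ e = t ^ (e+1) / (e+1) := by
    rw [intervalIntegral.integral_congr (g := fun τ => (t - τ) ^ e)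
      (fun τ hτ => by
        rw [Set.uIcc_of_le ht] at hτ
        simp [abs_of_nonneg (by linarith [hτ.2] : (0:ℝ) ≤ t - τ)])]
    rw [intervalIntegral.integral_comp_sub_left (fun x => x ^ e) t]
    simp [integral_rpow0 t he]
  have h2 : ∫ τ in t..T, |t - τ| ^ e = (T - t) ^ (e+1) / (e+1) := by
    rw [intervalIntegral.integral_congr (g := fun τ => (τ - t) ^ e)
      (fun τ hτ => by
        rw [Set.uIcc_of_le htT] at hτ
        rw [abs_of_nonpos (by linarith [hτ.1] : t - τ ≤ 0)]
        ring_nf)]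
    rw [intervalIntegral.integral_comp_sub_right (fun x => x ^ e) t]
    simp [integral_rpow0 (T - t) he]
  rw [← intervalIntegral.integral_add_adjacent_intervals (hint 0 t) (hint t T), h1, h2]
  ring

lemma real_beta {a b u : ℝ} (ha : 0 < a) (hb : 0 < b) (hu : 0 < u) :
    ∫ x in (0:ℝ)..u, x ^ (a-1) * (u - x) ^ (b-1)
      = Real.Gamma a * Real.Gamma b / Real.Gamma (a+b) * u ^ (a+b-1) := by
  have hGab : Real.Gamma (a+b) ≠ 0 := (Real.Gamma_pos_of_pos (by linarith)).ne'
  apply Complex.ofReal_injective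
  rw [← intervalIntegral.integral_ofReal]
  have hcongr : Set.EqOn (fun x : ℝ => ((x ^ (a-1) * (u - x) ^ (b-1) : ℝ) : ℂ))
      (fun x : ℝ => (x:ℂ) ^ ((a:ℂ) - 1) * ((u:ℂ) - x) ^ ((b:ℂ) - 1)) (Set.uIcc 0 u) := by
    intro x hx
    rw [Set.uIcc_of_le hu.le] at hx
    have hx0 : (0:ℝ) ≤ x := hx.1
    have hux : (0:ℝ) ≤ u - x := by linarith [hx.2]
    push_cast
    rw [Complex.ofReal_cpow hx0, Complex.ofReal_cpow hux]
    push_cast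
    ring
  rw [intervalIntegral.integral_congr hcongr]
  have := Complex.betaIntegral_scaled (a:ℂ) (b:ℂ) hu
  rw [this]
  have hB := Complex.Gamma_mul_Gamma_eq_betaIntegral
    (s := (a:ℂ)) (t := (b:ℂ)) (by simpa using ha) (by simpa using hb)
  have hG : Complex.Gamma ((a:ℂ) + b) ≠ 0 := by
    rw [show ((a:ℂ) + b) = ((a+b : ℝ) : ℂ) by push_cast; ring, Complex.Gamma_ofReal]
    exact_mod_cast hGab
  have hbeta : Complex.betaIntegral a b = Complex.Gamma a * Complex.Gamma b / Complex.Gamma ((a:ℂ)+b) := by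
    rw [eq_div_iff hG]
    linear_combination (-1 : ℂ) * hB
  rw [hbeta]
  rw [show ((a:ℂ) + b - 1) = ((a+b-1 : ℝ) : ℂ) by push_cast; ring,
    ← Complex.ofReal_cpow hu.le]
  rw [show ((a:ℂ) + b) = ((a+b : ℝ) : ℂ) by push_cast; ring]
  rw [Complex.Gamma_ofReal, Complex.Gamma_ofReal, Complex.Gamma_ofReal]
  push_cast
  ring
lemma rect_swap {T : ℝ} (hT : 0 ≤ T) {f : ℝ → ℝ → ℝ} (hf : Continuous (Function.uncurry f)) :
    ∫ t in (0:ℝ)..T, ∫ τ in (0:ℝ)..T, f t τ = ∫ τ in (0:ℝ)..T, ∫ t in (0:ℝ)..T, f t τ := by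
  simp only [intervalIntegral.integral_of_le hT]
  apply MeasureTheory.integral_integral_swap
  rw [Measure.prod_restrict]
  have : IntegrableOn (Function.uncurry f) (Set.Icc 0 T ×ˢ Set.Icc 0 T) (volume.prod volume) :=
    hf.continuousOn.integrableOn_compact (isCompact_Icc.prod isCompact_Icc)
  exact this.mono_set (Set.prod_mono Set.Ioc_subset_Icc_self Set.Ioc_subset_Icc_self)
lemma inner_eval {H T t : ℝ} (hH0 : 0 < H) (hT : 0 < T) (ht0 : 0 ≤ t) (htT : t ≤ T) :
    (∫ τ in (0:ℝ)..T, ((t ^ (2*H) + τ ^ (2*H) - |t - τ| ^ (2*H)) / 2) ^ 2)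
      = (T * t^(4*H) + T^(4*H+1)/(4*H+1) + (t^(4*H+1) + (T-t)^(4*H+1))/(4*H+1)
         + 2*(t^(2*H) * (T^(2*H+1)/(2*H+1)))
         - 2*(t^(2*H) * ((t^(2*H+1) + (T-t)^(2*H+1))/(2*H+1)))
         - 2*(∫ τ in (0:ℝ)..T, τ^(2*H) * |t - τ|^(2*H))) / 4 := by
  have h2H : (0:ℝ) < 2*H := by linarith
  have h4H : (0:ℝ) < 4*H := by linarith
  have hdbl : ∀ x : ℝ, 0 ≤ x → x ^ (4*H) = x ^ (2*H) * x ^ (2*H) := by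
    intro x hx
    rw [show (4:ℝ)*H = 2*H + 2*H by ring, Real.rpow_add' hx (by linarith)]
  have hexp : Set.EqOn (fun τ : ℝ => ((t ^ (2*H) + τ ^ (2*H) - |t - τ| ^ (2*H)) / 2) ^ 2)
      (fun τ : ℝ => (t^(4*H) + τ^(4*H) + |t-τ|^(4*H)
        + 2*(t^(2*H)*τ^(2*H)) - 2*(t^(2*H)*|t-τ|^(2*H)) - 2*(τ^(2*H)*|t-τ|^(2*H)))/4)
      (Set.uIcc 0 T) := by
    intro τ hτ
    rw [Set.uIcc_of_le hT.le] at hτ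
    simp only
    rw [hdbl t ht0, hdbl τ hτ.1, hdbl _ (abs_nonneg (t - τ))]
    ring
  rw [intervalIntegral.integral_congr hexp]
  -- integrability facts
  have i1 : IntervalIntegrable (fun _ : ℝ => t^(4*H)) volume 0 T := intervalIntegrable_const
  have i2 : IntervalIntegrable (fun τ : ℝ => τ^(4*H)) volume 0 T :=
    (cont_rpow _ h4H.le).intervalIntegrable _ _
  have i3 : IntervalIntegrable (fun τ : ℝ => |t-τ|^(4*H)) volume 0 T :=
    (cont_abs_rpow t _ h4H.le).intervalIntegrable _ _
  have i4 : IntervalIntegrable (fun τ : ℝ => 2*(t^(2*H)*τ^(2*H))) volume 0 T :=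
    (continuous_const.mul (continuous_const.mul (cont_rpow _ h2H.le))).intervalIntegrable _ _
  have i5 : IntervalIntegrable (fun τ : ℝ => 2*(t^(2*H)*|t-τ|^(2*H))) volume 0 T :=
    (continuous_const.mul (continuous_const.mul (cont_abs_rpow t _ h2H.le))).intervalIntegrable _ _
  have i6 : IntervalIntegrable (fun τ : ℝ => 2*(τ^(2*H)*|t-τ|^(2*H))) volume 0 T :=
    (continuous_const.mul ((cont_rpow _ h2H.le).mul (cont_abs_rpow t _ h2H.le))).intervalIntegrable _ _
  rw [intervalIntegral.integral_div,
    intervalIntegral.integral_sub ((((i1.add i2).add i3).add i4).sub i5) i6,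
    intervalIntegral.integral_sub (((i1.add i2).add i3).add i4) i5,
    intervalIntegral.integral_add ((i1.add i2).add i3) i4,
    intervalIntegral.integral_add (i1.add i2) i3,
    intervalIntegral.integral_add i1 i2]
  rw [intervalIntegral.integral_const, integral_rpow0 T h4H,
    integral_abs_rpow h4H hT.le ht0 htT,
    intervalIntegral.integral_const_mul, intervalIntegral.integral_const_mul,
    intervalIntegral.integral_const_mul, intervalIntegral.integral_const_mul,
    intervalIntegral.integral_const_mul, integral_rpow0 T h2H,
    integral_abs_rpow h2H hT.le ht0 htT]
  simp only [sub_zero, smul_eq_mul]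

lemma cross_eval {H T : ℝ} (hH0 : 0 < H) (hT : 0 < T) :
    ∫ t in (0:ℝ)..T, t^(2*H) * ((t^(2*H+1) + (T-t)^(2*H+1))/(2*H+1))
      = (T^(4*H+2)/(4*H+2)
         + Real.Gamma (2*H+1) * Real.Gamma (2*H+2) / Real.Gamma (4*H+3) * T^(4*H+2)) / (2*H+1) := by
  have h2H : (0:ℝ) < 2*H := by linarith
  have hco : Set.EqOn (fun t : ℝ => t^(2*H) * ((t^(2*H+1) + (T-t)^(2*H+1))/(2*H+1)))
      (fun t : ℝ => (t^(4*H+1) + t^(2*H) * (T-t)^(2*H+1))/(2*H+1)) (Set.uIcc 0 T) := by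
    intro t ht
    rw [Set.uIcc_of_le hT.le] at ht
    simp only
    have key : t^(2*H) * t^(2*H+1) = t^(4*H+1) := by
      rw [← Real.rpow_add' ht.1 (by linarith)]
      congr 1
      ring
    rw [← key]
    ring
  have ia : IntervalIntegrable (fun t : ℝ => t^(4*H+1)) MeasureTheory.volume 0 T :=
    (cont_rpow _ (by linarith)).intervalIntegrable _ _
  have ib : IntervalIntegrable (fun t : ℝ => t^(2*H) * (T-t)^(2*H+1)) MeasureTheory.volume 0 T :=
    ((cont_rpow _ h2H.le).mul ((continuous_const.sub continuous_id).rpow_const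
        (fun _ => Or.inr (by linarith)))).intervalIntegrable _ _
  rw [intervalIntegral.integral_congr hco, intervalIntegral.integral_div,
    intervalIntegral.integral_add ia ib,
    integral_rpow0 T (by linarith : (0:ℝ) < 4*H+1)]
  have hb := real_beta (a := 2*H+1) (b := 2*H+2) (by linarith) (by linarith) hT
  rw [show (2*H+1) - 1 = 2*H by ring, show (2*H+2) - 1 = 2*H+1 by ring,
    show (2*H+1) + (2*H+2) = 4*H+3 by ring, show (4*H+3) - 1 = 4*H+2 by ring] at hb
  rw [hb, show (4*H+1) + 1 = 4*H+2 by ring]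

theorem fBm_covariance_squared_norm (H T : ℝ) (hH : H ∈ Set.Ioo (0:ℝ) 1) (hT : 0 < T) :
    (∫ t in (0:ℝ)..T, ∫ τ in (0:ℝ)..T,
        ((t ^ (2*H) + τ ^ (2*H) - |t - τ| ^ (2*H)) / 2) ^ 2)
      = T ^ (4*H + 2) / 4 * ((4*H + 3) / ((2*H + 1) * (4*H + 1))
          - 4 * Real.Gamma (2*H + 1) ^ 2 / Real.Gamma (4*H + 3)) := by
  obtain ⟨hH0, hH1⟩ := hH
  have h2H : (0:ℝ) < 2*H := by linarith
  have h4H : (0:ℝ) < 4*H := by linarith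
  have h2H1 : (0:ℝ) < 2*H+1 := by linarith
  have h4H1 : (0:ℝ) < 4*H+1 := by linarith
  have h4H2 : (0:ℝ) < 4*H+2 := by linarith
  have hG3 : (0:ℝ) < Real.Gamma (4*H+3) := Real.Gamma_pos_of_pos (by linarith)
  have hJc : Continuous (fun t : ℝ => ∫ τ in (0:ℝ)..T, τ^(2*H) * |t - τ|^(2*H)) := by
    apply intervalIntegral.continuous_parametric_intervalIntegral_of_continuous'
    exact ((cont_rpow _ h2H.le).comp continuous_snd).mul
      (((continuous_fst.sub continuous_snd).abs).rpow_const (fun _ => Or.inr h2H.le))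
  rw [intervalIntegral.integral_congr (g := fun t : ℝ =>
      (T * t^(4*H) + T^(4*H+1)/(4*H+1) + (t^(4*H+1) + (T-t)^(4*H+1))/(4*H+1)
         + 2*(t^(2*H) * (T^(2*H+1)/(2*H+1)))
         - 2*(t^(2*H) * ((t^(2*H+1) + (T-t)^(2*H+1))/(2*H+1)))
         - 2*(∫ τ in (0:ℝ)..T, τ^(2*H) * |t - τ|^(2*H))) / 4)
    (fun t ht => by
      rw [Set.uIcc_of_le hT.le] at ht
      exact inner_eval hH0 hT ht.1 ht.2)]
  -- integrability of the six outer pieces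
  have j1 : IntervalIntegrable (fun t : ℝ => T * t^(4*H)) volume 0 T :=
    (continuous_const.mul (cont_rpow _ h4H.le)).intervalIntegrable _ _
  have j2 : IntervalIntegrable (fun _ : ℝ => T^(4*H+1)/(4*H+1)) volume 0 T :=
    intervalIntegrable_const
  have csub : ∀ e : ℝ, 0 ≤ e → Continuous (fun t : ℝ => (T - t) ^ e) :=
    fun e he => (continuous_const.sub continuous_id).rpow_const (fun _ => Or.inr he)
  have j3 : IntervalIntegrable (fun t : ℝ => (t^(4*H+1) + (T-t)^(4*H+1))/(4*H+1)) volume 0 T :=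
    (((cont_rpow _ (by linarith)).add (csub _ (by linarith))).div_const _).intervalIntegrable _ _
  have j4 : IntervalIntegrable (fun t : ℝ => 2*(t^(2*H) * (T^(2*H+1)/(2*H+1)))) volume 0 T :=
    (continuous_const.mul ((cont_rpow _ h2H.le).mul continuous_const)).intervalIntegrable _ _
  have j5 : IntervalIntegrable
      (fun t : ℝ => 2*(t^(2*H) * ((t^(2*H+1) + (T-t)^(2*H+1))/(2*H+1)))) volume 0 T :=
    (continuous_const.mul ((cont_rpow _ h2H.le).mul
      (((cont_rpow _ (by linarith)).add (csub _ (by linarith))).div_const _))).intervalIntegrable _ _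
  have j6 : IntervalIntegrable
      (fun t : ℝ => 2*(∫ τ in (0:ℝ)..T, τ^(2*H) * |t - τ|^(2*H))) volume 0 T :=
    (continuous_const.mul hJc).intervalIntegrable _ _
  rw [intervalIntegral.integral_div,
    intervalIntegral.integral_sub ((((j1.add j2).add j3).add j4).sub j5) j6,
    intervalIntegral.integral_sub (((j1.add j2).add j3).add j4) j5,
    intervalIntegral.integral_add ((j1.add j2).add j3) j4,
    intervalIntegral.integral_add (j1.add j2) j3,
    intervalIntegral.integral_add j1 j2]
  -- evaluate the six pieces
  have e1 : ∫ t in (0:ℝ)..T, T * t^(4*H) = T * (T^(4*H+1)/(4*H+1)) := by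
    rw [intervalIntegral.integral_const_mul, integral_rpow0 T h4H]
  have e2 : ∫ _ in (0:ℝ)..T, T^(4*H+1)/(4*H+1) = T * (T^(4*H+1)/(4*H+1)) := by
    rw [intervalIntegral.integral_const]
    simp [smul_eq_mul]
  have e3 : ∫ t in (0:ℝ)..T, (t^(4*H+1) + (T-t)^(4*H+1))/(4*H+1)
      = (T^(4*H+2)/(4*H+2) + T^(4*H+2)/(4*H+2))/(4*H+1) := by
    rw [intervalIntegral.integral_div,
      intervalIntegral.integral_add ((cont_rpow _ (by linarith)).intervalIntegrable _ _)
        ((csub _ (by linarith)).intervalIntegrable _ _),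
      integral_rpow0 T (by linarith : (0:ℝ) < 4*H+1)]
    have h4 : ∫ t in (0:ℝ)..T, (T-t)^(4*H+1) = T^(4*H+1+1)/(4*H+1+1) := by
      rw [intervalIntegral.integral_comp_sub_left (fun x => x^(4*H+1)) T, sub_self, sub_zero,
        integral_rpow0 T (by linarith : (0:ℝ) < 4*H+1)]
    rw [h4, show (4*H+1) + 1 = 4*H+2 by ring]
  have e4 : ∫ t in (0:ℝ)..T, 2*(t^(2*H) * (T^(2*H+1)/(2*H+1)))
      = 2*((T^(2*H+1)/(2*H+1)) * (T^(2*H+1)/(2*H+1))) := by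
    rw [intervalIntegral.integral_const_mul, intervalIntegral.integral_mul_const,
      integral_rpow0 T h2H]
  have e5 : ∫ t in (0:ℝ)..T, 2*(t^(2*H) * ((t^(2*H+1) + (T-t)^(2*H+1))/(2*H+1)))
      = 2*((T^(4*H+2)/(4*H+2)
         + Real.Gamma (2*H+1) * Real.Gamma (2*H+2) / Real.Gamma (4*H+3) * T^(4*H+2)) / (2*H+1)) := by
    rw [intervalIntegral.integral_const_mul, cross_eval hH0 hT]
  have e6 : ∫ t in (0:ℝ)..T, 2*(∫ τ in (0:ℝ)..T, τ^(2*H) * |t - τ|^(2*H))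
      = 2*((T^(4*H+2)/(4*H+2)
         + Real.Gamma (2*H+1) * Real.Gamma (2*H+2) / Real.Gamma (4*H+3) * T^(4*H+2)) / (2*H+1)) := by
    rw [intervalIntegral.integral_const_mul]
    rw [rect_swap hT.le (f := fun t τ => τ^(2*H) * |t - τ|^(2*H))
      (((cont_rpow _ h2H.le).comp continuous_snd).mul
        (((continuous_fst.sub continuous_snd).abs).rpow_const (fun _ => Or.inr h2H.le)))]
    rw [intervalIntegral.integral_congr
      (g := fun τ : ℝ => τ^(2*H) * ((τ^(2*H+1) + (T-τ)^(2*H+1))/(2*H+1)))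
      (fun τ hτ => by
        rw [Set.uIcc_of_le hT.le] at hτ
        simp only
        rw [intervalIntegral.integral_const_mul,
          intervalIntegral.integral_congr (g := fun x : ℝ => |τ - x|^(2*H))
            (fun x _ => by simp only; rw [abs_sub_comm]),
          integral_abs_rpow h2H hT.le hτ.1 hτ.2])]
    rw [cross_eval hH0 hT]
  rw [e1, e2, e3, e4, e5, e6]
  -- final algebra
  have hu2 : T^(4*H+2) = (T^(2*H+1))^2 := by
    rw [show (4*H+2 : ℝ) = (2*H+1)*2 by ring, Real.rpow_mul hT.le,
      show ((2:ℝ) = ((2:ℕ):ℝ)) by norm_num, Real.rpow_natCast]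
  have hu1 : T^(4*H+1) = (T^(2*H+1))^2 / T := by
    rw [show (4*H+1 : ℝ) = (4*H+2) - 1 by ring, Real.rpow_sub hT, Real.rpow_one, hu2]
  have hGam : Real.Gamma (2*H+2) = (2*H+1) * Real.Gamma (2*H+1) := by
    rw [show (2*H+2 : ℝ) = (2*H+1)+1 by ring, Real.Gamma_add_one h2H1.ne']
  rw [hu1, hu2, hGam]
  field_simp
  ring
end
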